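/- arXiv:1611.06144 — 3 statements merged into one kernel-verified Lean document; each statement's English description precedes it below -/
import Mathlib

section
/- The Malvenuto–Reutenauer product on permutations, defined by σ *′ ρ := sh(σ ⊗ ρ̄) where ρ̄(i) = n + ρ(i) for σ ∈ Sₙ, ρ ∈ Sₘ and permutations are viewed as words, is an associative product on ℤS = ⊕_{n≥0} ℤSₙ with identity the unique element λ ∈ S₀. -/
def shuffle {A : Type*} : List A → List A → Multiset (List A)
  | [], w => {w}
  | u, [] => {u}
  | a :: u, b :: v => (shuffle u (b :: v)).map (a :: ·) + (shuffle (a :: u) v).map (b :: ·)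
termination_by u v => u.length + v.length
decreasing_by all_goals simp +arith +decide

/-- A word `w` on ℕ is a permutation word (an element of `S_{|w|}`, 0-indexed) if it is a
rearrangement of `(0, 1, …, |w|-1)`. -/
def IsPermWord (w : List ℕ) : Prop := w.Perm (List.range w.length)

/-- The Malvenuto–Reutenauer product on permutation words:
`σ *′ ρ := sh(σ ⊗ ρ̄)` where `ρ̄(i) = n + ρ(i)`, `n = |σ|`. -/
def mrW (u v : List ℕ) : Multiset (List ℕ) := shuffle u (v.map (· + u.length))

/-- The ℤ-bilinear extension of the MR product to `ℤS` (the free ℤ-module on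
permutation words). -/
noncomputable def mrMul (p q : List ℕ →₀ ℤ) : List ℕ →₀ ℤ :=
  p.sum fun u a => q.sum fun v b =>
    (a * b) • ((mrW u v).map (fun w => Finsupp.single w (1 : ℤ))).sum

/-!
Both bracketings of `σ *′ ρ *′ τ` are the three-way shuffle of `σ`, of `ρ` shifted by `|σ|`
and of `τ` shifted by `|σ| + |ρ|`: on the left because every word of `σ *′ ρ` has length
`|σ| + |ρ|`, on the right because shifting letters commutes with shuffling, so the two shifts
applied to `τ` add up. Each bracketing of plain shuffles is the three-way shuffle, as seen by
splitting off the first letter. Bilinearity carries associativity from words to `ℤS`, and the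
empty word is a unit since shuffling with it does nothing.
-/

namespace Multiset

variable {α R : Type*} [Semiring R]

noncomputable def formalSum (s : Multiset α) : α →₀ R :=
  (s.map fun w => Finsupp.single w 1).sum

@[simp] theorem formalSum_zero : (formalSum 0 : α →₀ R) = 0 := rfl

@[simp] theorem formalSum_cons (a : α) (s : Multiset α) :
    (formalSum (a ::ₘ s) : α →₀ R) = Finsupp.single a 1 + formalSum s := by
  simp [formalSum]

@[simp] theorem formalSum_add (s t : Multiset α) :
    (formalSum (s + t) : α →₀ R) = formalSum s + formalSum t := by
  simp [formalSum]

@[simp] theorem formalSum_singleton (a : α) :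
    (formalSum {a} : α →₀ R) = Finsupp.single a 1 := by
  simp [formalSum]

end Multiset

open Multiset

section BilinearExtension

variable {α R : Type*} [CommSemiring R] (m : α → α → Multiset α)

noncomputable def bilinearExt (p q : α →₀ R) : α →₀ R :=
  p.sum fun u a => q.sum fun v b => (a * b) • formalSum (m u v)

@[simp] theorem bilinearExt_zero_left (q : α →₀ R) : bilinearExt m 0 q = 0 := by
  simp [bilinearExt]

@[simp] theorem bilinearExt_zero_right (p : α →₀ R) : bilinearExt m p 0 = 0 := by
  simp [bilinearExt]

theorem bilinearExt_add_left (p₁ p₂ q : α →₀ R) :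
    bilinearExt m (p₁ + p₂) q = bilinearExt m p₁ q + bilinearExt m p₂ q :=
  Finsupp.sum_add_index' (by simp) fun u a₁ a₂ => by
    simp only [add_mul, add_smul, Finsupp.sum_add]

theorem bilinearExt_add_right (p q₁ q₂ : α →₀ R) :
    bilinearExt m p (q₁ + q₂) = bilinearExt m p q₁ + bilinearExt m p q₂ := by
  simp only [bilinearExt, ← Finsupp.sum_add]
  refine Finsupp.sum_congr fun u _ => Finsupp.sum_add_index' (by simp) fun v b₁ b₂ => ?_
  rw [mul_add, add_smul]

theorem bilinearExt_single_single (u v : α) (a b : R) :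
    bilinearExt m (Finsupp.single u a) (Finsupp.single v b) = (a * b) • formalSum (m u v) := by
  simp [bilinearExt]

theorem bilinearExt_single_formalSum (u : α) (t : Multiset α) :
    bilinearExt m (Finsupp.single u 1) (formalSum t : α →₀ R) = formalSum (t.bind (m u)) := by
  induction t using Multiset.induction with
  | empty => simp
  | cons v t ih => simp [bilinearExt_add_right, ih, bilinearExt_single_single]

theorem bilinearExt_formalSum (s t : Multiset α) :
    bilinearExt m (formalSum s : α →₀ R) (formalSum t)
      = formalSum (s.bind fun u => t.bind (m u)) := by
  induction s using Multiset.induction with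
  | empty => simp
  | cons u s ih => simp [bilinearExt_add_left, ih, bilinearExt_single_formalSum]

theorem bilinearExt_smul_left (c : R) (p q : α →₀ R) :
    bilinearExt m (c • p) q = c • bilinearExt m p q := by
  rw [bilinearExt, Finsupp.sum_smul_index' (by simp), bilinearExt, Finsupp.smul_sum]
  refine Finsupp.sum_congr fun u _ => ?_
  simp only [Finsupp.smul_sum, smul_eq_mul, mul_assoc, mul_smul]

theorem bilinearExt_smul_right (c : R) (p q : α →₀ R) :
    bilinearExt m p (c • q) = c • bilinearExt m p q := by
  rw [bilinearExt, bilinearExt, Finsupp.smul_sum]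
  refine Finsupp.sum_congr fun u _ => ?_
  rw [Finsupp.sum_smul_index' (by simp), Finsupp.smul_sum]
  refine Finsupp.sum_congr fun v _ => ?_
  rw [smul_eq_mul, smul_smul, mul_left_comm]

theorem bilinearExt_assoc (hm : ∀ u v w, (m u v).bind (m · w) = (m v w).bind (m u))
    (p q r : α →₀ R) :
    bilinearExt m (bilinearExt m p q) r = bilinearExt m p (bilinearExt m q r) := by
  induction p using Finsupp.induction_linear with
  | zero => simp
  | add p₁ p₂ h₁ h₂ => simp only [bilinearExt_add_left, h₁, h₂]
  | single u a =>
    induction q using Finsupp.induction_linear with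
    | zero => simp
    | add q₁ q₂ h₁ h₂ => simp only [bilinearExt_add_left, bilinearExt_add_right, h₁, h₂]
    | single v b =>
      induction r using Finsupp.induction_linear with
      | zero => simp
      | add r₁ r₂ h₁ h₂ => simp only [bilinearExt_add_right, h₁, h₂]
      | single w c =>
        rw [← Finsupp.smul_single_one u a, ← Finsupp.smul_single_one v b,
          ← Finsupp.smul_single_one w c]
        simp only [bilinearExt_smul_left, bilinearExt_smul_right, ← formalSum_singleton (R := R),
          bilinearExt_formalSum, Multiset.singleton_bind, hm]

theorem bilinearExt_single_one_left {e : α} (he : ∀ v, m e v = {v}) (p : α →₀ R) :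
    bilinearExt m (Finsupp.single e 1) p = p := by
  simp [bilinearExt, he]

theorem bilinearExt_single_one_right {e : α} (he : ∀ u, m u e = {u}) (p : α →₀ R) :
    bilinearExt m p (Finsupp.single e 1) = p := by
  simp [bilinearExt, he]

end BilinearExtension

section Shuffle

variable {A : Type*}

@[simp] theorem shuffle_nil_left (w : List A) : shuffle [] w = {w} := by
  cases w <;> simp [shuffle]

@[simp] theorem shuffle_nil_right (u : List A) : shuffle u [] = {u} := by
  cases u <;> simp [shuffle]

theorem shuffle_cons_cons (a b : A) (u v : List A) :
    shuffle (a :: u) (b :: v) =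
      (shuffle u (b :: v)).map (a :: ·) + (shuffle (a :: u) v).map (b :: ·) := by
  simp [shuffle]

theorem length_of_mem_shuffle : ∀ {u v x : List A}, x ∈ shuffle u v →
    x.length = u.length + v.length
  | [], v, x, hx => by simp_all
  | a :: u, [], x, hx => by simp_all
  | a :: u, b :: v, x, hx => by
    rw [shuffle_cons_cons] at hx
    rcases Multiset.mem_add.1 hx with hx | hx <;> obtain ⟨y, hy, rfl⟩ := Multiset.mem_map.1 hx <;>
      simp only [List.length_cons, length_of_mem_shuffle hy] <;> omega
termination_by u v => u.length + v.length

theorem shuffle_map {B : Type*} (f : A → B) : ∀ u v : List A,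
    shuffle (u.map f) (v.map f) = (shuffle u v).map (List.map f)
  | [], v => by simp
  | a :: u, [] => by simp
  | a :: u, b :: v => by
    rw [List.map_cons, List.map_cons, shuffle_cons_cons, shuffle_cons_cons, Multiset.map_add,
      ← List.map_cons, ← List.map_cons, shuffle_map f u, shuffle_map f _ v]
    simp only [Multiset.map_map, Function.comp_def, List.map_cons]
termination_by u v => u.length + v.length

def shuffle3 : List A → List A → List A → Multiset (List A)
  | [], v, w => shuffle v w
  | u, [], w => shuffle u w
  | u, v, [] => shuffle u v
  | a :: u, b :: v, c :: w =>
      (shuffle3 u (b :: v) (c :: w)).map (a :: ·) + (shuffle3 (a :: u) v (c :: w)).map (b :: ·)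
        + (shuffle3 (a :: u) (b :: v) w).map (c :: ·)
termination_by u v w => u.length + v.length + w.length

theorem shuffle_bind_shuffle_left : ∀ u v w : List A,
    (shuffle u v).bind (shuffle · w) = shuffle3 u v w
  | [], v, w => by simp [shuffle3]
  | a :: u, [], w => by simp [shuffle3]
  | a :: u, b :: v, [] => by simpa [shuffle3] using Multiset.bind_singleton _ id
  | a :: u, b :: v, c :: w => by
    calc (shuffle (a :: u) (b :: v)).bind (shuffle · (c :: w))
        = ((shuffle u (b :: v)).bind (shuffle · (c :: w))).map (a :: ·)
          + ((shuffle (a :: u) v).bind (shuffle · (c :: w))).map (b :: ·)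
          + (((shuffle u (b :: v)).map (a :: ·) + (shuffle (a :: u) v).map (b :: ·)).bind
              (shuffle · w)).map (c :: ·) := by
          simp only [shuffle_cons_cons, Multiset.add_bind, Multiset.bind_map, Multiset.bind_add,
            Multiset.map_bind, Multiset.map_add]
          abel
      _ = shuffle3 (a :: u) (b :: v) (c :: w) := by
          rw [← shuffle_cons_cons, shuffle_bind_shuffle_left u, shuffle_bind_shuffle_left _ v,
            shuffle_bind_shuffle_left _ _ w, shuffle3]
termination_by u v w => u.length + v.length + w.length

theorem shuffle_bind_shuffle_right : ∀ u v w : List A,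
    (shuffle v w).bind (shuffle u ·) = shuffle3 u v w
  | [], v, w => by simpa [shuffle3] using Multiset.bind_singleton _ id
  | a :: u, [], w => by simp [shuffle3]
  | a :: u, b :: v, [] => by simp [shuffle3]
  | a :: u, b :: v, c :: w => by
    calc (shuffle (b :: v) (c :: w)).bind (shuffle (a :: u) ·)
        = (((shuffle v (c :: w)).map (b :: ·) + (shuffle (b :: v) w).map (c :: ·)).bind
              (shuffle u ·)).map (a :: ·)
          + ((shuffle v (c :: w)).bind (shuffle (a :: u) ·)).map (b :: ·)
          + ((shuffle (b :: v) w).bind (shuffle (a :: u) ·)).map (c :: ·) := by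
          simp only [shuffle_cons_cons, Multiset.add_bind, Multiset.bind_map, Multiset.bind_add,
            Multiset.map_bind, Multiset.map_add]
          abel
      _ = shuffle3 (a :: u) (b :: v) (c :: w) := by
          rw [← shuffle_cons_cons, shuffle_bind_shuffle_right u, shuffle_bind_shuffle_right _ v,
            shuffle_bind_shuffle_right _ _ w, shuffle3]
termination_by u v w => u.length + v.length + w.length

theorem shuffle_assoc (u v w : List A) :
    (shuffle u v).bind (shuffle · w) = (shuffle v w).bind (shuffle u ·) := by
  rw [shuffle_bind_shuffle_left, shuffle_bind_shuffle_right]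

end Shuffle

@[simp] theorem mrW_nil_left (v : List ℕ) : mrW [] v = {v} := by
  simp [mrW]

@[simp] theorem mrW_nil_right (u : List ℕ) : mrW u [] = {u} := by
  simp [mrW]

theorem mrW_assoc (u v w : List ℕ) :
    (mrW u v).bind (mrW · w) = (mrW v w).bind (mrW u) := by
  have shift_left : (mrW u v).bind (mrW · w)
      = (shuffle u (v.map (· + u.length))).bind
          (shuffle · (w.map (· + (u.length + v.length)))) :=
    Multiset.bind_congr fun x hx => by
      rw [mrW, length_of_mem_shuffle hx, List.length_map]
  have shift_right : (mrW v w).bind (mrW u)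
      = (shuffle (v.map (· + u.length)) (w.map (· + (u.length + v.length)))).bind
          (shuffle u ·) := by
    have shift_twice :
        w.map (· + (u.length + v.length)) = (w.map (· + v.length)).map (· + u.length) := by
      simp [Function.comp_def]; omega
    rw [shift_twice, shuffle_map, Multiset.bind_map]
    rfl
  rw [shift_left, shift_right, shuffle_assoc]

theorem mrMul_eq_bilinearExt : mrMul = bilinearExt mrW := rfl

/-- the Malvenuto–Reutenauer product `*′` is an associative product on
`ℤS = ⊕ₙ ℤSₙ`, with identity the unique element `λ ∈ S₀` (the empty word). -/
theorem mr_product_assoc_with_identity :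
    (∀ p q r : List ℕ →₀ ℤ,
      (∀ w ∈ p.support, IsPermWord w) → (∀ w ∈ q.support, IsPermWord w) →
      (∀ w ∈ r.support, IsPermWord w) →
      mrMul (mrMul p q) r = mrMul p (mrMul q r)) ∧
    (∀ p : List ℕ →₀ ℤ, (∀ w ∈ p.support, IsPermWord w) →
      mrMul p (Finsupp.single [] 1) = p ∧ mrMul (Finsupp.single [] 1) p = p) := by
  rw [mrMul_eq_bilinearExt]
  exact ⟨fun p q r _ _ _ => bilinearExt_assoc mrW mrW_assoc p q r,
    fun p _ => ⟨bilinearExt_single_one_right mrW mrW_nil_right p,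
      bilinearExt_single_one_left mrW mrW_nil_left p⟩⟩
end

section
/- Young's integral exists: if x : [0,1] → ℝ is continuous with finite p-variation and y : [0,1] → ℝ is continuous with finite q-variation, where p,q ≥ 1 and 1/p + 1/q > 1, then the Riemann–Stieltjes sums Σ_k x_{t_k}(y_{t_{k+1}} − y_{t_k}) over partitions D of [0,1] converge to a limit as the mesh |D| → 0. -/
/-!
Young–Loève estimate: write `‖x‖` for the `p`-variation of `x` on `[a, b]` and `‖y‖` for the
`q`-variation of `y`. In a partition of `[a, b]` with `n + 1 ≥ 2` cells, pigeonholing gives an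
interior point whose adjacent increments satisfy `|Δx|^p ≤ 2‖x‖^p / n` and
`|Δy|^q ≤ 2‖y‖^q / n`. Deleting that point changes the Riemann–Stieltjes sum by the product of
these increments, which is `O(n^(-θ))` with `θ = 1/p + 1/q`. Deleting points one at a time down
to the trivial partition bounds `|S - x a (y b - y a)|` by `2^θ ζ(θ) ‖x‖ ‖y‖`, finite because
`θ > 1`.

Because `θ > 1` is strict, slightly larger exponents `p' > p`, `q' > q` still have
`1/p' + 1/q' > 1`. On a cell of a fine partition the oscillation of `x` is at most `η` by uniform
continuity, so there `Σ |Δx|^p' ≤ η^(p'-p) Σ |Δx|^p`. Applying the estimate with `p', q'` on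
every cell of a common refinement, then Hölder's inequality and superadditivity of `‖x‖^p`,
shows that any two partitions of small mesh have sums within a power of `η` of each other: the
sums are Cauchy as the mesh tends to zero.
-/

/-- `t` is a finite partition `a = t₀ ≤ t₁ ≤ ⋯ ≤ tₙ = b` of `[a,b]`. -/
def IsPartitionOn (a b : ℝ) (n : ℕ) (t : ℕ → ℝ) : Prop :=
  1 ≤ n ∧ t 0 = a ∧ t n = b ∧ ∀ k < n, t k ≤ t (k + 1)

/-- The `p`-variation sum of `x` over a partition. -/
noncomputable def varSum (x : ℝ → ℝ) (p : ℝ) (n : ℕ) (t : ℕ → ℝ) : ℝ :=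
  ∑ k ∈ Finset.range n, |x (t (k + 1)) - x (t k)| ^ p

/-- `x` has finite `p`-variation on `[a,b]`: the partition sums `Σ |Δx|^p` are
uniformly bounded. -/
def FiniteVarOn (x : ℝ → ℝ) (p a b : ℝ) : Prop :=
  ∃ M : ℝ, ∀ n t, IsPartitionOn a b n t → varSum x p n t ≤ M

open Finset Filter Topology

theorem monotoneOn_nat_Iic_of_le_succ {α : Type*} [Preorder α] {f : ℕ → α} {n : ℕ}
    (hf : ∀ k < n, f k ≤ f (k + 1)) : MonotoneOn f (Set.Iic n) := by
  have hg : Monotone fun k => f (min k n) := monotone_nat_of_le_succ fun k => by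
    rcases lt_or_ge k n with hk | hk
    · rw [min_eq_left hk.le, min_eq_left hk]; exact hf k hk
    · rw [min_eq_right hk, min_eq_right (by omega)]
  intro i hi j hj hij
  simpa [min_eq_left (Set.mem_Iic.mp hi), min_eq_left (Set.mem_Iic.mp hj)] using hg hij

namespace Finset

variable {ι : Type*} {f g : ι → ℝ}

theorem exists_le_two_mul_div_card {s : Finset ι} (hs : s.Nonempty) {A B : ℝ}
    (hf : ∀ i ∈ s, 0 ≤ f i) (hg : ∀ i ∈ s, 0 ≤ g i)
    (hfA : ∑ i ∈ s, f i ≤ A) (hgB : ∑ i ∈ s, g i ≤ B) :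
    ∃ i ∈ s, f i ≤ 2 * A / #s ∧ g i ≤ 2 * B / #s := by
  have hcard : (0 : ℝ) < #s := by exact_mod_cast hs.card_pos
  have hA : 0 ≤ A := (sum_nonneg hf).trans hfA
  have hB : 0 ≤ B := (sum_nonneg hg).trans hgB
  -- `h i / C ≤ 2 / #s` still bounds `h i` when `C = 0`, since then `h` vanishes on `s`
  have hscale : ∀ {h : ι → ℝ} {C : ℝ}, (∀ i ∈ s, 0 ≤ h i) → ∑ i ∈ s, h i ≤ C →
      ∀ i ∈ s, h i / C ≤ 2 / #s → h i ≤ 2 * C / #s := by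
    intro h C hh hC i hi hle
    rcases ((sum_nonneg hh).trans hC).eq_or_lt with rfl | hCpos
    · simpa using (single_le_sum hh hi).trans hC
    · rw [div_le_div_iff₀ hCpos hcard] at hle
      rwa [le_div_iff₀ hcard]
  obtain ⟨i, hi, hle⟩ := exists_le_of_sum_le hs
    (f := fun i => f i / A + g i / B) (g := fun _ => 2 / #s) <| by
      rw [sum_add_distrib, ← sum_div, ← sum_div, sum_const, nsmul_eq_mul,
        mul_div_cancel₀ _ hcard.ne']
      linarith [div_le_one_of_le₀ hfA hA, div_le_one_of_le₀ hgB hB]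
  have hfi := div_nonneg (hf i hi) hA
  have hgi := div_nonneg (hg i hi) hB
  exact ⟨i, hi, hscale hf hfA i hi (by linarith), hscale hg hgB i hi (by linarith)⟩

theorem sum_rpow_le_rpow_sum (s : Finset ι) {σ : ℝ} (hσ : 1 ≤ σ) (hf : ∀ i ∈ s, 0 ≤ f i) :
    ∑ i ∈ s, f i ^ σ ≤ (∑ i ∈ s, f i) ^ σ := by
  have hsplit : ∀ {z : ℝ}, 0 ≤ z → z ^ σ = z * z ^ (σ - 1) := fun hz => by
    rw [← Real.rpow_one_add' hz (by linarith), add_sub_cancel]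
  calc ∑ i ∈ s, f i ^ σ ≤ ∑ i ∈ s, f i * (∑ j ∈ s, f j) ^ (σ - 1) :=
        sum_le_sum fun i hi => by
          rw [hsplit (hf i hi)]
          exact mul_le_mul_of_nonneg_left
            (Real.rpow_le_rpow (hf i hi) (single_le_sum hf hi) (by linarith)) (hf i hi)
    _ = (∑ i ∈ s, f i) ^ σ := by rw [← sum_mul, ← hsplit (sum_nonneg hf)]

theorem sum_rpow_mul_rpow_le (s : Finset ι) {α β : ℝ} (hα : 0 < α) (hβ : 0 < β)
    (hαβ : 1 ≤ α + β) (hf : ∀ i ∈ s, 0 ≤ f i) (hg : ∀ i ∈ s, 0 ≤ g i) :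
    ∑ i ∈ s, f i ^ α * g i ^ β ≤ (∑ i ∈ s, f i) ^ α * (∑ i ∈ s, g i) ^ β := by
  set σ := α + β
  have hσ : 0 < σ := by positivity
  have htriple : α⁻¹.HolderTriple β⁻¹ σ⁻¹ :=
    ⟨by simp only [inv_inv, σ], inv_pos.mpr hα, inv_pos.mpr hβ⟩
  have hfg : ∀ i ∈ s, 0 ≤ f i ^ α * g i ^ β := fun i hi =>
    mul_nonneg (Real.rpow_nonneg (hf i hi) _) (Real.rpow_nonneg (hg i hi) _)
  have hholder := Real.Lr_rpow_le_Lp_mul_Lq_of_nonneg s htriple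
    (fun i hi => Real.rpow_nonneg (hf i hi) α) (fun i hi => Real.rpow_nonneg (hg i hi) β)
  rw [sum_congr rfl fun i hi => Real.rpow_rpow_inv (hf i hi) hα.ne',
    sum_congr rfl fun i hi => Real.rpow_rpow_inv (hg i hi) hβ.ne'] at hholder
  have hSf := sum_nonneg hf
  have hSg := sum_nonneg hg
  calc ∑ i ∈ s, f i ^ α * g i ^ β = ∑ i ∈ s, ((f i ^ α * g i ^ β) ^ σ⁻¹) ^ σ :=
        sum_congr rfl fun i hi => (Real.rpow_inv_rpow (hfg i hi) hσ.ne').symm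
    _ ≤ (∑ i ∈ s, (f i ^ α * g i ^ β) ^ σ⁻¹) ^ σ :=
        sum_rpow_le_rpow_sum s hαβ fun i hi => Real.rpow_nonneg (hfg i hi) _
    _ ≤ ((∑ i ∈ s, f i) ^ (σ⁻¹ / α⁻¹) * (∑ i ∈ s, g i) ^ (σ⁻¹ / β⁻¹)) ^ σ :=
        Real.rpow_le_rpow (sum_nonneg fun i hi => Real.rpow_nonneg (hfg i hi) _) hholder hσ.le
    _ = (∑ i ∈ s, f i) ^ α * (∑ i ∈ s, g i) ^ β := by
        rw [Real.mul_rpow (by positivity) (by positivity), ← Real.rpow_mul hSf,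
          ← Real.rpow_mul hSg]
        congr 2 <;> field_simp

theorem sum_range_eq_sum_range_sum_Ico {M : Type*} [AddCommMonoid M] (w : ℕ → M)
    {σ : ℕ → ℕ} {n : ℕ} (h0 : σ 0 = 0) (hσ : ∀ k < n, σ k ≤ σ (k + 1)) :
    ∑ j ∈ range (σ n), w j = ∑ k ∈ range n, ∑ j ∈ Ico (σ k) (σ (k + 1)), w j := by
  induction n with
  | zero => simp [h0]
  | succ n ih =>
    rw [sum_range_succ, ← ih fun k hk => hσ k (by omega), range_eq_Ico, range_eq_Ico,
      sum_Ico_consecutive _ (Nat.zero_le _) (hσ n n.lt_succ_self)]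

end Finset

namespace IsPartitionOn

variable {a b : ℝ} {n : ℕ} {t : ℕ → ℝ}

theorem monotoneOn (h : IsPartitionOn a b n t) : MonotoneOn t (Set.Iic n) :=
  monotoneOn_nat_Iic_of_le_succ h.2.2.2

theorem mem_Icc (h : IsPartitionOn a b n t) {k : ℕ} (hk : k ≤ n) : t k ∈ Set.Icc a b := by
  constructor
  · simpa only [h.2.1] using h.monotoneOn (Nat.zero_le n) hk (Nat.zero_le k)
  · simpa only [h.2.2.1] using h.monotoneOn hk (Set.mem_Iic.mpr le_rfl) hk

theorem le (h : IsPartitionOn a b n t) : a ≤ b :=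
  h.2.1 ▸ (h.mem_Icc (Nat.zero_le n)).2

end IsPartitionOn

theorem isPartitionOn_uniform {a b : ℝ} (hab : a ≤ b) {n : ℕ} (hn : 1 ≤ n) :
    IsPartitionOn a b n (fun k => a + k * ((b - a) / n)) := by
  have hn' : (0 : ℝ) < n := by exact_mod_cast hn
  refine ⟨hn, by simp, by field_simp; ring, fun k _ => ?_⟩
  push_cast
  nlinarith [div_nonneg (sub_nonneg.mpr hab) hn'.le]

def glue (m : ℕ) (s s' : ℕ → ℝ) : ℕ → ℝ := fun j => if j ≤ m then s j else s' (j - m)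

theorem glue_of_le {m j : ℕ} {s s' : ℕ → ℝ} (hj : j ≤ m) : glue m s s' j = s j := if_pos hj

theorem glue_add {m : ℕ} {s s' : ℕ → ℝ} (h : s m = s' 0) (j : ℕ) :
    glue m s s' (m + j) = s' j := by
  rcases j.eq_zero_or_pos with rfl | hj
  · simpa [glue] using h
  · simp [glue, hj.ne']

theorem IsPartitionOn.glue {u w v : ℝ} {m m' : ℕ} {s s' : ℕ → ℝ}
    (hs : IsPartitionOn u w m s) (hs' : IsPartitionOn w v m' s') :
    IsPartitionOn u v (m + m') (glue m s s') := by
  have hjoin : s m = s' 0 := hs.2.2.1.trans hs'.2.1.symm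
  refine ⟨by have := hs.1; omega, by rw [glue_of_le (Nat.zero_le m)]; exact hs.2.1,
    by rw [glue_add hjoin]; exact hs'.2.2.1, fun k hk => ?_⟩
  rcases lt_or_ge k m with hkm | hkm
  · rw [glue_of_le hkm.le, glue_of_le hkm]; exact hs.2.2.2 k hkm
  · obtain ⟨j, rfl⟩ := Nat.exists_eq_add_of_le hkm
    rw [glue_add hjoin, add_assoc, glue_add hjoin]
    exact hs'.2.2.2 j (by omega)

theorem varSum_glue (x : ℝ → ℝ) (p : ℝ) {u w v : ℝ} {m m' : ℕ} {s s' : ℕ → ℝ}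
    (hs : IsPartitionOn u w m s) (hs' : IsPartitionOn w v m' s') :
    varSum x p (m + m') (glue m s s') = varSum x p m s + varSum x p m' s' := by
  have h : s m = s' 0 := hs.2.2.1.trans hs'.2.1.symm
  unfold varSum
  rw [sum_range_add]
  congr 1
  · refine sum_congr rfl fun j hj => ?_
    rw [glue_of_le (mem_range.mp hj), glue_of_le (mem_range.mp hj).le]
  · refine sum_congr rfl fun j _ => ?_
    rw [add_assoc, glue_add h, glue_add h]

theorem varSum_nonneg (x : ℝ → ℝ) (p : ℝ) (n : ℕ) (t : ℕ → ℝ) : 0 ≤ varSum x p n t :=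
  sum_nonneg fun _ _ => Real.rpow_nonneg (abs_nonneg _) p

theorem FiniteVarOn.mono {x : ℝ → ℝ} {p a b u v : ℝ} (hx : FiniteVarOn x p a b)
    (hau : a ≤ u) (hvb : v ≤ b) : FiniteVarOn x p u v := by
  obtain ⟨M, hM⟩ := hx
  refine ⟨M, fun m s hs => ?_⟩
  have hleft := isPartitionOn_uniform hau le_rfl
  have hright := isPartitionOn_uniform hvb le_rfl
  have hbound := hM _ _ ((hleft.glue hs).glue hright)
  rw [varSum_glue x p (hleft.glue hs) hright, varSum_glue x p hleft hs] at hbound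
  exact (le_add_of_nonneg_left (varSum_nonneg _ _ _ _)).trans
    ((le_add_of_nonneg_right (varSum_nonneg _ _ _ _)).trans hbound)

def varSums (x : ℝ → ℝ) (p u v : ℝ) : Set ℝ :=
  {r | ∃ m s, IsPartitionOn u v m s ∧ varSum x p m s = r}

/-- The `p`-th power of the `p`-variation of `x` on `[u, v]`. -/
noncomputable def varSup (x : ℝ → ℝ) (p u v : ℝ) : ℝ := sSup (varSums x p u v)

section varSup

variable {x : ℝ → ℝ} {p u w v : ℝ}

theorem varSums_nonempty (huv : u ≤ v) : (varSums x p u v).Nonempty :=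
  ⟨_, 1, _, isPartitionOn_uniform huv le_rfl, rfl⟩

theorem FiniteVarOn.bddAbove (hx : FiniteVarOn x p u v) : BddAbove (varSums x p u v) := by
  obtain ⟨M, hM⟩ := hx
  exact ⟨M, by rintro _ ⟨m, s, hs, rfl⟩; exact hM m s hs⟩

theorem varSum_le_varSup (hx : FiniteVarOn x p u v) {m : ℕ} {s : ℕ → ℝ}
    (hs : IsPartitionOn u v m s) : varSum x p m s ≤ varSup x p u v :=
  le_csSup hx.bddAbove ⟨m, s, hs, rfl⟩

theorem varSup_nonneg (hx : FiniteVarOn x p u v) (huv : u ≤ v) : 0 ≤ varSup x p u v :=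
  (varSum_nonneg x p _ _).trans (varSum_le_varSup hx (isPartitionOn_uniform huv le_rfl))

theorem varSup_add_varSup_le (hx : FiniteVarOn x p u v) (huw : u ≤ w) (hwv : w ≤ v) :
    varSup x p u w + varSup x p w v ≤ varSup x p u v := by
  unfold varSup
  rw [← csSup_add (varSums_nonempty huw) (hx.mono le_rfl hwv).bddAbove
    (varSums_nonempty hwv) (hx.mono huw le_rfl).bddAbove]
  refine csSup_le_csSup hx.bddAbove ((varSums_nonempty huw).add (varSums_nonempty hwv)) ?_
  rintro _ ⟨_, ⟨m, s, hs, rfl⟩, _, ⟨m', s', hs', rfl⟩, rfl⟩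
  exact ⟨_, _, hs.glue hs', varSum_glue x p hs hs'⟩

end varSup

theorem sum_varSup_le {x : ℝ → ℝ} {p a b : ℝ} (hx : FiniteVarOn x p a b) {n : ℕ}
    {t : ℕ → ℝ} (ht : IsPartitionOn a b n t) :
    ∑ k ∈ range n, varSup x p (t k) (t (k + 1)) ≤ varSup x p a b := by
  induction n generalizing b with
  | zero => exact absurd ht.1 (by omega)
  | succ n ih =>
    have htn := ht.mem_Icc n.le_succ
    obtain ⟨-, h0, hn, hstep⟩ := ht
    rcases n.eq_zero_or_pos with rfl | hpos
    · simp [h0, hn]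
    · have hinit : IsPartitionOn a (t n) n t := ⟨hpos, h0, rfl, fun k hk => hstep k (by omega)⟩
      rw [sum_range_succ, hn]
      calc _ ≤ varSup x p a (t n) + varSup x p (t n) b := by
            gcongr
            exact ih (hx.mono le_rfl htn.2) hinit
        _ ≤ varSup x p a b := varSup_add_varSup_le hx htn.1 htn.2

section Oscillation

variable {x : ℝ → ℝ} {p p' ε : ℝ}

theorem varSum_le_rpow_mul_varSum (hp : 0 < p) (hpp' : p ≤ p') {m : ℕ} {s : ℕ → ℝ}
    (hosc : ∀ j < m, |x (s (j + 1)) - x (s j)| ≤ ε) :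
    varSum x p' m s ≤ ε ^ (p' - p) * varSum x p m s := by
  rw [varSum, varSum, mul_sum]
  refine sum_le_sum fun j hj => ?_
  have hd := abs_nonneg (x (s (j + 1)) - x (s j))
  rw [← sub_add_cancel p' p, Real.rpow_add' hd (by linarith), add_sub_cancel_right]
  have hdε := hosc j (mem_range.mp hj)
  gcongr

variable {u v : ℝ}

theorem varSum_le_rpow_mul_varSup (hp : 0 < p) (hpp' : p ≤ p') (hx : FiniteVarOn x p u v)
    (hε : 0 ≤ ε) (hosc : ∀ w ∈ Set.Icc u v, ∀ w' ∈ Set.Icc u v, |x w - x w'| ≤ ε) {m : ℕ}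
    {s : ℕ → ℝ} (hs : IsPartitionOn u v m s) :
    varSum x p' m s ≤ ε ^ (p' - p) * varSup x p u v :=
  (varSum_le_rpow_mul_varSum hp hpp' fun j hj =>
    hosc _ (hs.mem_Icc hj) _ (hs.mem_Icc hj.le)).trans
      (mul_le_mul_of_nonneg_left (varSum_le_varSup hx hs) (by positivity))

theorem FiniteVarOn.of_oscillation_le (hp : 0 < p) (hpp' : p ≤ p') (hx : FiniteVarOn x p u v)
    (hε : 0 ≤ ε) (hosc : ∀ w ∈ Set.Icc u v, ∀ w' ∈ Set.Icc u v, |x w - x w'| ≤ ε) :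
    FiniteVarOn x p' u v :=
  ⟨_, fun _ _ => varSum_le_rpow_mul_varSup hp hpp' hx hε hosc⟩

theorem varSup_le_rpow_mul_varSup (hp : 0 < p) (hpp' : p ≤ p') (hx : FiniteVarOn x p u v)
    (hε : 0 ≤ ε) (hosc : ∀ w ∈ Set.Icc u v, ∀ w' ∈ Set.Icc u v, |x w - x w'| ≤ ε)
    (huv : u ≤ v) : varSup x p' u v ≤ ε ^ (p' - p) * varSup x p u v :=
  csSup_le (varSums_nonempty huv) <| by
    rintro _ ⟨m, s, hs, rfl⟩
    exact varSum_le_rpow_mul_varSup hp hpp' hx hε hosc hs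

end Oscillation

noncomputable def stieltjesSum (x y : ℝ → ℝ) (n : ℕ) (t : ℕ → ℝ) : ℝ :=
  ∑ k ∈ range n, x (t k) * (y (t (k + 1)) - y (t k))

def erasePoint (t : ℕ → ℝ) (i : ℕ) : ℕ → ℝ := fun k => if k < i then t k else t (k + 1)

theorem isPartitionOn_erasePoint {a b : ℝ} {n k : ℕ} {t : ℕ → ℝ}
    (ht : IsPartitionOn a b (n + 1) t) (hk : k < n) :
    IsPartitionOn a b n (erasePoint t (k + 1)) := by
  refine ⟨by omega, by simpa [erasePoint] using ht.2.1,
    by simpa [erasePoint, show ¬ n < k + 1 by omega] using ht.2.2.1, fun j hj => ?_⟩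
  have hmono := ht.monotoneOn
  unfold erasePoint
  split_ifs <;> exact hmono (by simp; omega) (by simp; omega) (by omega)

theorem stieltjesSum_sub_stieltjesSum_erasePoint (x y : ℝ → ℝ) (t : ℕ → ℝ) {n k : ℕ}
    (hk : k < n) :
    stieltjesSum x y (n + 1) t - stieltjesSum x y n (erasePoint t (k + 1)) =
      (x (t (k + 1)) - x (t k)) * (y (t (k + 2)) - y (t (k + 1))) := by
  obtain ⟨m, rfl⟩ := Nat.exists_eq_add_of_lt hk
  set e := erasePoint t (k + 1)
  have hhead : ∀ j ≤ k, e j = t j := fun j hj => if_pos (by omega)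
  have htail : ∀ j, e (k + 1 + j) = t (k + 2 + j) := fun j => by
    simp only [e, erasePoint, if_neg (show ¬ k + 1 + j < k + 1 by omega)]
    congr 1; omega
  unfold stieltjesSum
  rw [show k + m + 1 + 1 = k + 2 + m by ring, show k + m + 1 = k + 1 + m by ring,
    sum_range_add, sum_range_add (n := k + 1), sum_range_succ _ (k + 1), sum_range_succ _ k,
    sum_range_succ _ k]
  have hsame : ∑ j ∈ range k, x (e j) * (y (e (j + 1)) - y (e j)) =
      ∑ j ∈ range k, x (t j) * (y (t (j + 1)) - y (t j)) :=
    sum_congr rfl fun j hj => by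
      rw [hhead j (mem_range.mp hj).le, hhead (j + 1) (mem_range.mp hj)]
  have hrest : ∑ j ∈ range m, x (e (k + 1 + j)) * (y (e (k + 1 + j + 1)) - y (e (k + 1 + j))) =
      ∑ j ∈ range m, x (t (k + 2 + j)) * (y (t (k + 2 + j + 1)) - y (t (k + 2 + j))) :=
    sum_congr rfl fun j _ => by rw [add_assoc (k + 1), htail, htail]; rfl
  rw [hsame, hrest, hhead k le_rfl, htail 0]
  ring_nf

section YoungLoeve

variable {x y : ℝ → ℝ} {p q a b : ℝ}

theorem rpow_div_mul_rpow_div {A B c : ℝ} (hA : 0 ≤ A) (hB : 0 ≤ B) (hc : 0 < c) :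
    (2 * A / c) ^ p⁻¹ * (2 * B / c) ^ q⁻¹ =
      2 ^ (p⁻¹ + q⁻¹) * A ^ p⁻¹ * B ^ q⁻¹ * c ^ (-(p⁻¹ + q⁻¹)) := by
  rw [Real.div_rpow (by positivity) hc.le, Real.div_rpow (by positivity) hc.le,
    Real.mul_rpow zero_le_two hA, Real.mul_rpow zero_le_two hB, Real.rpow_neg hc.le,
    Real.rpow_add two_pos, Real.rpow_add hc]
  field_simp

theorem exists_abs_mul_adjacent_increments_le (hp : 0 < p) (hq : 0 < q)
    (hx : FiniteVarOn x p a b) (hy : FiniteVarOn y q a b) (N : ℕ) {t : ℕ → ℝ}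
    (ht : IsPartitionOn a b (N + 2) t) :
    ∃ k < N + 1, |(x (t (k + 1)) - x (t k)) * (y (t (k + 2)) - y (t (k + 1)))| ≤
      2 ^ (p⁻¹ + q⁻¹) * varSup x p a b ^ p⁻¹ * varSup y q a b ^ q⁻¹ *
        ((N : ℝ) + 1) ^ (-(p⁻¹ + q⁻¹)) := by
  set f : ℕ → ℝ := fun k => |x (t (k + 1)) - x (t k)| ^ p
  set g : ℕ → ℝ := fun k => |y (t (k + 2)) - y (t (k + 1))| ^ q
  have hf : ∀ k ∈ range (N + 1), 0 ≤ f k := fun k _ => by positivity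
  have hg : ∀ k ∈ range (N + 1), 0 ≤ g k := fun k _ => by positivity
  have hfA : ∑ k ∈ range (N + 1), f k ≤ varSup x p a b := by
    refine le_trans ?_ (varSum_le_varSup hx ht)
    rw [varSum, sum_range_succ _ (N + 1)]
    exact le_add_of_nonneg_right (by positivity)
  have hgB : ∑ k ∈ range (N + 1), g k ≤ varSup y q a b := by
    refine le_trans ?_ (varSum_le_varSup hy ht)
    rw [varSum, sum_range_succ' _ (N + 1)]
    exact le_add_of_nonneg_right (by positivity)
  obtain ⟨k, hk, hfk, hgk⟩ :=
    exists_le_two_mul_div_card (nonempty_range_iff.mpr N.succ_ne_zero) hf hg hfA hgB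
  rw [card_range, Nat.cast_add_one] at hfk hgk
  have hA := varSup_nonneg hx ht.le
  have hB := varSup_nonneg hy ht.le
  refine ⟨k, mem_range.mp hk, ?_⟩
  rw [abs_mul, ← rpow_div_mul_rpow_div hA hB (by positivity)]
  gcongr
  · exact (Real.le_rpow_inv_iff_of_pos (abs_nonneg _) (by positivity) hp).mpr hfk
  · exact (Real.le_rpow_inv_iff_of_pos (abs_nonneg _) (by positivity) hq).mpr hgk

theorem abs_stieltjesSum_sub_le_sum_range (hp : 0 < p) (hq : 0 < q)
    (hx : FiniteVarOn x p a b) (hy : FiniteVarOn y q a b) (N : ℕ) {t : ℕ → ℝ}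
    (ht : IsPartitionOn a b (N + 1) t) :
    |stieltjesSum x y (N + 1) t - x a * (y b - y a)| ≤
      2 ^ (p⁻¹ + q⁻¹) * varSup x p a b ^ p⁻¹ * varSup y q a b ^ q⁻¹ *
        ∑ m ∈ range N, ((m : ℝ) + 1) ^ (-(p⁻¹ + q⁻¹)) := by
  induction N generalizing t with
  | zero => simp [stieltjesSum, ht.2.1, ht.2.2.1]
  | succ N ih =>
    obtain ⟨k, hk, hcost⟩ := exists_abs_mul_adjacent_increments_le hp hq hx hy N ht
    have hrest := ih (isPartitionOn_erasePoint ht hk)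
    rw [← stieltjesSum_sub_stieltjesSum_erasePoint x y t hk] at hcost
    have htri := abs_sub_le (stieltjesSum x y (N + 1 + 1) t)
      (stieltjesSum x y (N + 1) (erasePoint t (k + 1))) (x a * (y b - y a))
    rw [sum_range_succ, mul_add]
    linarith

noncomputable def youngConstant (θ : ℝ) : ℝ := 2 ^ θ * ∑' m : ℕ, ((m : ℝ) + 1) ^ (-θ)

theorem youngConstant_nonneg (θ : ℝ) : 0 ≤ youngConstant θ :=
  mul_nonneg (by positivity) (tsum_nonneg fun _ => by positivity)

theorem abs_stieltjesSum_sub_le (hp : 0 < p) (hq : 0 < q) (hpq : 1 < p⁻¹ + q⁻¹)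
    (hx : FiniteVarOn x p a b) (hy : FiniteVarOn y q a b) {n : ℕ} {t : ℕ → ℝ}
    (ht : IsPartitionOn a b n t) :
    |stieltjesSum x y n t - x a * (y b - y a)| ≤
      youngConstant (p⁻¹ + q⁻¹) * varSup x p a b ^ p⁻¹ * varSup y q a b ^ q⁻¹ := by
  obtain ⟨N, rfl⟩ : ∃ N, n = N + 1 := ⟨n - 1, by have := ht.1; omega⟩
  have hsum : Summable fun m : ℕ => ((m : ℝ) + 1) ^ (-(p⁻¹ + q⁻¹)) := by
    simpa using (summable_nat_add_iff 1).mpr (Real.summable_nat_rpow.mpr (by linarith))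
  refine (abs_stieltjesSum_sub_le_sum_range hp hq hx hy N ht).trans ?_
  have hA := varSup_nonneg hx ht.le
  have hB := varSup_nonneg hy ht.le
  rw [youngConstant, mul_right_comm, mul_right_comm _ (varSup x p a b ^ p⁻¹)]
  gcongr
  exact hsum.sum_le_tsum _ fun _ _ => by positivity

theorem abs_stieltjesSum_sub_le_of_oscillation_le {p' q' εx εy : ℝ} (hp : 0 < p) (hq : 0 < q)
    (hpp' : p ≤ p') (hqq' : q ≤ q') (hpq' : 1 < p'⁻¹ + q'⁻¹) (hx : FiniteVarOn x p a b)
    (hy : FiniteVarOn y q a b) (hεx : 0 ≤ εx) (hεy : 0 ≤ εy)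
    (hoscx : ∀ u ∈ Set.Icc a b, ∀ v ∈ Set.Icc a b, |x u - x v| ≤ εx)
    (hoscy : ∀ u ∈ Set.Icc a b, ∀ v ∈ Set.Icc a b, |y u - y v| ≤ εy) {n : ℕ} {t : ℕ → ℝ}
    (ht : IsPartitionOn a b n t) :
    |stieltjesSum x y n t - x a * (y b - y a)| ≤
      youngConstant (p'⁻¹ + q'⁻¹) * (εx ^ (p' - p) * varSup x p a b) ^ p'⁻¹ *
        (εy ^ (q' - q) * varSup y q a b) ^ q'⁻¹ := by
  have hp' := hp.trans_le hpp'
  have hq' := hq.trans_le hqq'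
  have hx' := hx.of_oscillation_le hp hpp' hεx hoscx
  have hy' := hy.of_oscillation_le hq hqq' hεy hoscy
  have hVx := varSup_nonneg hx ht.le
  have hVy := varSup_nonneg hy ht.le
  have hVx' := varSup_nonneg hx' ht.le
  have hVy' := varSup_nonneg hy' ht.le
  have hC := youngConstant_nonneg (p'⁻¹ + q'⁻¹)
  refine (abs_stieltjesSum_sub_le hp' hq' hpq' hx' hy' ht).trans ?_
  gcongr
  · exact varSup_le_rpow_mul_varSup hp hpp' hx hεx hoscx ht.le
  · exact varSup_le_rpow_mul_varSup hq hqq' hy hεy hoscy ht.le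

end YoungLoeve

/-- `(N, r)` refines `(n, t)`, the point `t k` being `r (σ k)`. -/
def RefinesVia (σ : ℕ → ℕ) (N : ℕ) (r : ℕ → ℝ) (n : ℕ) (t : ℕ → ℝ) : Prop :=
  σ 0 = 0 ∧ σ n = N ∧ (∀ k < n, σ k ≤ σ (k + 1)) ∧ ∀ k ≤ n, r (σ k) = t k

namespace RefinesVia

variable {σ : ℕ → ℕ} {N n : ℕ} {r t : ℕ → ℝ}

theorem stieltjesSum_eq_sum (x y : ℝ → ℝ) (h : RefinesVia σ N r n t) :
    stieltjesSum x y N r =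
      ∑ k ∈ range n, stieltjesSum x y (σ (k + 1) - σ k) (fun j => r (σ k + j)) := by
  rw [stieltjesSum, ← h.2.1, sum_range_eq_sum_range_sum_Ico _ h.1 h.2.2.1]
  exact sum_congr rfl fun k _ => sum_Ico_eq_sum_range _ _ _

theorem isPartitionOn_cell {a b : ℝ} (h : RefinesVia σ N r n t) (hr : IsPartitionOn a b N r)
    {k : ℕ} (hk : k < n) (hlt : σ k < σ (k + 1)) :
    IsPartitionOn (t k) (t (k + 1)) (σ (k + 1) - σ k) (fun j => r (σ k + j)) := by
  obtain ⟨-, hN, hσ, hrσ⟩ := h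
  have hle : σ (k + 1) ≤ N := hN ▸ monotoneOn_nat_Iic_of_le_succ hσ
    (Set.mem_Iic.mpr hk) (Set.mem_Iic.mpr le_rfl) hk
  refine ⟨by omega, by simpa using hrσ k hk.le, ?_, fun j hj => hr.2.2.2 _ (by omega)⟩
  show r (σ k + (σ (k + 1) - σ k)) = t (k + 1)
  rw [Nat.add_sub_cancel' hlt.le]
  exact hrσ (k + 1) hk

theorem abs_cell_sub_le {x y : ℝ → ℝ} {a b B : ℝ} (h : RefinesVia σ N r n t)
    (hr : IsPartitionOn a b N r) {k : ℕ} (hk : k < n) (hB : 0 ≤ B)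
    (hbound : ∀ m s, IsPartitionOn (t k) (t (k + 1)) m s →
      |stieltjesSum x y m s - x (t k) * (y (t (k + 1)) - y (t k))| ≤ B) :
    |stieltjesSum x y (σ (k + 1) - σ k) (fun j => r (σ k + j)) -
        x (t k) * (y (t (k + 1)) - y (t k))| ≤ B := by
  rcases (h.2.2.1 k hk).eq_or_lt with heq | hlt
  · have htt : t k = t (k + 1) := by rw [← h.2.2.2 k hk.le, ← h.2.2.2 (k + 1) hk, heq]
    simpa [heq, stieltjesSum, htt] using hB
  · exact hbound _ _ (h.isPartitionOn_cell hr hk hlt)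

end RefinesVia

theorem abs_stieltjesSum_sub_le_of_refinesVia {x y : ℝ → ℝ} {p q p' q' a b εx εy : ℝ}
    (hp : 0 < p) (hq : 0 < q) (hpp' : p ≤ p') (hqq' : q ≤ q') (hpq' : 1 < p'⁻¹ + q'⁻¹)
    (hx : FiniteVarOn x p a b) (hy : FiniteVarOn y q a b) {n N : ℕ} {t r : ℕ → ℝ}
    {σ : ℕ → ℕ} (ht : IsPartitionOn a b n t) (hr : IsPartitionOn a b N r)
    (href : RefinesVia σ N r n t) (hεx : 0 ≤ εx) (hεy : 0 ≤ εy)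
    (hoscx : ∀ k < n, ∀ u ∈ Set.Icc (t k) (t (k + 1)), ∀ v ∈ Set.Icc (t k) (t (k + 1)),
      |x u - x v| ≤ εx)
    (hoscy : ∀ k < n, ∀ u ∈ Set.Icc (t k) (t (k + 1)), ∀ v ∈ Set.Icc (t k) (t (k + 1)),
      |y u - y v| ≤ εy) :
    |stieltjesSum x y N r - stieltjesSum x y n t| ≤
      youngConstant (p'⁻¹ + q'⁻¹) * (εx ^ (p' - p) * varSup x p a b) ^ p'⁻¹ *
        (εy ^ (q' - q) * varSup y q a b) ^ q'⁻¹ := by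
  have hp' := hp.trans_le hpp'
  have hq' := hq.trans_le hqq'
  set C := youngConstant (p'⁻¹ + q'⁻¹)
  have hC : 0 ≤ C := youngConstant_nonneg _
  set Vx : ℕ → ℝ := fun k => εx ^ (p' - p) * varSup x p (t k) (t (k + 1))
  set Vy : ℕ → ℝ := fun k => εy ^ (q' - q) * varSup y q (t k) (t (k + 1))
  have hcell : ∀ k < n, t k ≤ t (k + 1) ∧ FiniteVarOn x p (t k) (t (k + 1)) ∧
      FiniteVarOn y q (t k) (t (k + 1)) := fun k hk =>
    ⟨ht.2.2.2 k hk, hx.mono (ht.mem_Icc hk.le).1 (ht.mem_Icc hk).2,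
      hy.mono (ht.mem_Icc hk.le).1 (ht.mem_Icc hk).2⟩
  have hVx : ∀ k ∈ range n, 0 ≤ Vx k := fun k hk => by
    obtain ⟨htk, hxk, -⟩ := hcell k (mem_range.mp hk)
    have hVxk := varSup_nonneg hxk htk
    positivity
  have hVy : ∀ k ∈ range n, 0 ≤ Vy k := fun k hk => by
    obtain ⟨htk, -, hyk⟩ := hcell k (mem_range.mp hk)
    have hVyk := varSup_nonneg hyk htk
    positivity
  have hterm : ∀ k ∈ range n,
      |stieltjesSum x y (σ (k + 1) - σ k) (fun j => r (σ k + j)) -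
          x (t k) * (y (t (k + 1)) - y (t k))| ≤ C * Vx k ^ p'⁻¹ * Vy k ^ q'⁻¹ := by
    intro k hk
    obtain ⟨-, hxk, hyk⟩ := hcell k (mem_range.mp hk)
    have hVxk := hVx k hk
    have hVyk := hVy k hk
    exact href.abs_cell_sub_le hr (mem_range.mp hk) (by positivity) fun m s hs =>
      abs_stieltjesSum_sub_le_of_oscillation_le hp hq hpp' hqq' hpq' hxk hyk hεx hεy
        (hoscx k (mem_range.mp hk)) (hoscy k (mem_range.mp hk)) hs
  have hsumx : ∑ k ∈ range n, Vx k ≤ εx ^ (p' - p) * varSup x p a b := by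
    rw [← mul_sum]; gcongr; exact sum_varSup_le hx ht
  have hsumy : ∑ k ∈ range n, Vy k ≤ εy ^ (q' - q) * varSup y q a b := by
    rw [← mul_sum]; gcongr; exact sum_varSup_le hy ht
  calc |stieltjesSum x y N r - stieltjesSum x y n t|
      = |∑ k ∈ range n, (stieltjesSum x y (σ (k + 1) - σ k) (fun j => r (σ k + j)) -
          x (t k) * (y (t (k + 1)) - y (t k)))| := by
        rw [href.stieltjesSum_eq_sum, stieltjesSum, sum_sub_distrib]
    _ ≤ ∑ k ∈ range n, C * Vx k ^ p'⁻¹ * Vy k ^ q'⁻¹ :=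
        (abs_sum_le_sum_abs _ _).trans (sum_le_sum hterm)
    _ = C * ∑ k ∈ range n, Vx k ^ p'⁻¹ * Vy k ^ q'⁻¹ := by
        rw [mul_sum]; exact sum_congr rfl fun _ _ => mul_assoc _ _ _
    _ ≤ C * ((∑ k ∈ range n, Vx k) ^ p'⁻¹ * (∑ k ∈ range n, Vy k) ^ q'⁻¹) := by
        gcongr
        exact sum_rpow_mul_rpow_le _ (by positivity) (by positivity) hpq'.le hVx hVy
    _ ≤ C * ((εx ^ (p' - p) * varSup x p a b) ^ p'⁻¹ *
          (εy ^ (q' - q) * varSup y q a b) ^ q'⁻¹) := by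
        have hSx := sum_nonneg hVx
        have hSy := sum_nonneg hVy
        have hBx := hSx.trans hsumx
        have hBy := hSy.trans hsumy
        gcongr
    _ = _ := (mul_assoc _ _ _).symm

theorem exists_partition_refinesVia {a b : ℝ} (hab : a < b) (F : Finset ℝ) (ha : a ∈ F)
    (hb : b ∈ F) (hF : ∀ z ∈ F, z ∈ Set.Icc a b) :
    ∃ N r, IsPartitionOn a b N r ∧ ∀ n t, IsPartitionOn a b n t → (∀ k ≤ n, t k ∈ F) →
      ∃ σ, RefinesVia σ N r n t := by
  set c := #F
  have hc : 2 ≤ c := one_lt_card.mpr ⟨a, ha, b, hb, hab.ne⟩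
  set e := F.orderIsoOfFin (rfl : #F = c)
  have hmin : F.min' ⟨a, ha⟩ = a :=
    le_antisymm (min'_le F a ha) (le_min' _ _ _ fun z hz => (hF z hz).1)
  have hmax : F.max' ⟨a, ha⟩ = b :=
    le_antisymm (max'_le _ _ _ fun z hz => (hF z hz).2) (le_max' F b hb)
  have he0 : (e ⟨0, by omega⟩ : ℝ) = a := by
    rw [coe_orderIsoOfFin_apply, orderEmbOfFin_zero rfl (by omega), hmin]
  have helast : (e ⟨c - 1, by omega⟩ : ℝ) = b := by
    rw [coe_orderIsoOfFin_apply, orderEmbOfFin_last rfl (by omega), hmax]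
  let r : ℕ → ℝ := fun j => if h : j < c then e ⟨j, h⟩ else b
  let idx : ℝ → ℕ := fun z => if h : z ∈ F then e.symm ⟨z, h⟩ else 0
  have hr_idx : ∀ z ∈ F, r (idx z) = z := fun z hz => by
    simp only [r, idx, dif_pos hz, Fin.eta, e.apply_symm_apply]
    exact dif_pos (e.symm ⟨z, hz⟩).isLt
  have hidx_mono : ∀ z ∈ F, ∀ z' ∈ F, z ≤ z' → idx z ≤ idx z' := fun z hz z' hz' hzz' => by
    simpa [idx, hz, hz'] using e.symm.monotone (show (⟨z, hz⟩ : F) ≤ ⟨z', hz'⟩ from hzz')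
  have hidx_a : idx a = 0 := by
    simp only [idx, ha, dif_pos]
    rw [show (⟨a, ha⟩ : F) = e ⟨0, by omega⟩ from Subtype.ext he0.symm, e.symm_apply_apply]
  have hidx_b : idx b = c - 1 := by
    simp only [idx, hb, dif_pos]
    rw [show (⟨b, hb⟩ : F) = e ⟨c - 1, by omega⟩ from Subtype.ext helast.symm, e.symm_apply_apply]
  refine ⟨c - 1, r, ⟨by omega, by simpa [r, show 0 < c by omega] using he0,
    by simpa [r, show c - 1 < c by omega] using helast, fun j hj => ?_⟩, fun n t ht htF => ?_⟩
  · simp only [r, dif_pos (show j < c by omega), dif_pos (show j + 1 < c by omega)]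
    exact e.monotone (Fin.mk_le_mk.mpr j.le_succ)
  · refine ⟨fun k => idx (t k), by simp [ht.2.1, hidx_a], by simp [ht.2.2.1, hidx_b],
      fun k hk => hidx_mono _ (htF k hk.le) _ (htF (k + 1) hk) (ht.2.2.2 k hk),
      fun k hk => hr_idx _ (htF k hk)⟩

theorem exists_common_refinesVia {a b : ℝ} (hab : a < b) {n n' : ℕ} {t t' : ℕ → ℝ}
    (ht : IsPartitionOn a b n t) (ht' : IsPartitionOn a b n' t') :
    ∃ N r, IsPartitionOn a b N r ∧ (∃ σ, RefinesVia σ N r n t) ∧ ∃ σ', RefinesVia σ' N r n' t' := by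
  classical
  set F := (range (n + 1)).image t ∪ (range (n' + 1)).image t'
  have htF : ∀ k ≤ n, t k ∈ F := fun k hk =>
    mem_union_left _ (mem_image_of_mem t (mem_range.mpr (by omega)))
  have ht'F : ∀ k ≤ n', t' k ∈ F := fun k hk =>
    mem_union_right _ (mem_image_of_mem t' (mem_range.mpr (by omega)))
  have hF : ∀ z ∈ F, z ∈ Set.Icc a b := by
    simp only [F, mem_union, mem_image, mem_range]
    rintro _ (⟨k, hk, rfl⟩ | ⟨k, hk, rfl⟩)
    exacts [ht.mem_Icc (by omega), ht'.mem_Icc (by omega)]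
  obtain ⟨N, r, hr, hrefine⟩ := exists_partition_refinesVia hab F
    (ht.2.1 ▸ htF 0 (Nat.zero_le n)) (ht.2.2.1 ▸ htF n le_rfl) hF
  exact ⟨N, r, hr, hrefine n t ht htF, hrefine n' t' ht' ht'F⟩

theorem exists_lt_lt_one_lt_inv_add_inv {p q : ℝ} (hp : 0 < p) (hq : 0 < q)
    (hpq : 1 < p⁻¹ + q⁻¹) : ∃ p' q', p < p' ∧ q < q' ∧ 1 < p'⁻¹ + q'⁻¹ := by
  set c := (1 + (p⁻¹ + q⁻¹)) / 2
  have hc : 1 < c := by simp only [c]; linarith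
  refine ⟨c * p, c * q, lt_mul_left hp hc, lt_mul_left hq hc, ?_⟩
  rw [mul_inv, mul_inv, ← mul_add, ← div_eq_inv_mul, one_lt_div (by linarith)]
  simp only [c]; linarith

theorem tendsto_mul_rpow_mul_rpow_nhds_zero {α β γ δ K A B : ℝ} (hα : 0 < α) (hβ : 0 < β)
    (hγ : 0 < γ) (hδ : 0 < δ) :
    Tendsto (fun η : ℝ => K * (η ^ α * A) ^ β * (η ^ γ * B) ^ δ) (𝓝 0) (𝓝 0) := by
  have hcont : ContinuousAt (fun η : ℝ => K * (η ^ α * A) ^ β * (η ^ γ * B) ^ δ) 0 := by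
    fun_prop (disch := positivity)
  simpa [Real.zero_rpow hα.ne', Real.zero_rpow hβ.ne', Real.zero_rpow hγ.ne',
    Real.zero_rpow hδ.ne'] using hcont.tendsto

theorem IsPartitionOn.abs_sub_le_of_mesh_lt {f : ℝ → ℝ} {a b δ ε : ℝ} {n : ℕ} {t : ℕ → ℝ}
    (ht : IsPartitionOn a b n t) (hmesh : ∀ k < n, t (k + 1) - t k < δ)
    (hf : ∀ u ∈ Set.Icc a b, ∀ v ∈ Set.Icc a b, |u - v| < δ → |f u - f v| ≤ ε) :
    ∀ k < n, ∀ u ∈ Set.Icc (t k) (t (k + 1)), ∀ v ∈ Set.Icc (t k) (t (k + 1)),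
      |f u - f v| ≤ ε := by
  intro k hk u hu v hv
  have hsub : Set.Icc (t k) (t (k + 1)) ⊆ Set.Icc a b :=
    Set.Icc_subset_Icc (ht.mem_Icc hk.le).1 (ht.mem_Icc hk).2
  exact hf u (hsub hu) v (hsub hv) (by
    rw [abs_lt]; constructor <;> linarith [hmesh k hk, hu.1, hu.2, hv.1, hv.2])

theorem ContinuousOn.exists_forall_Icc_abs_sub_le {f : ℝ → ℝ} {a b : ℝ}
    (hf : ContinuousOn f (Set.Icc a b)) {ε : ℝ} (hε : 0 < ε) :
    ∃ δ > 0, ∀ u ∈ Set.Icc a b, ∀ v ∈ Set.Icc a b, |u - v| < δ → |f u - f v| ≤ ε := by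
  obtain ⟨δ, hδ, h⟩ :=
    Metric.uniformContinuousOn_iff.mp (isCompact_Icc.uniformContinuousOn_of_continuous hf) ε hε
  exact ⟨δ, hδ, fun u hu v hv huv => (h u hu v hv huv).le⟩

theorem exists_abs_stieltjesSum_sub_lt {x y : ℝ → ℝ} {p q a b : ℝ} (hab : a < b) (hp : 0 < p)
    (hq : 0 < q) (hpq : 1 < p⁻¹ + q⁻¹) (hxc : ContinuousOn x (Set.Icc a b))
    (hyc : ContinuousOn y (Set.Icc a b)) (hx : FiniteVarOn x p a b) (hy : FiniteVarOn y q a b)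
    {ε : ℝ} (hε : 0 < ε) :
    ∃ δ > 0, ∀ n t n' t', IsPartitionOn a b n t → (∀ k < n, t (k + 1) - t k < δ) →
      IsPartitionOn a b n' t' → (∀ k < n', t' (k + 1) - t' k < δ) →
      |stieltjesSum x y n t - stieltjesSum x y n' t'| < ε := by
  obtain ⟨p', q', hpp', hqq', hpq'⟩ := exists_lt_lt_one_lt_inv_add_inv hp hq hpq
  have hp' := hp.trans hpp'
  have hq' := hq.trans hqq'
  have hlim := (tendsto_mul_rpow_mul_rpow_nhds_zero (sub_pos.mpr hpp') (inv_pos.mpr hp')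
    (sub_pos.mpr hqq') (inv_pos.mpr hq') (K := youngConstant (p'⁻¹ + q'⁻¹))
    (A := varSup x p a b) (B := varSup y q a b)).mono_left (nhdsWithin_le_nhds (s := Set.Ioi 0))
  obtain ⟨η, hsmall, hη⟩ :=
    ((hlim.eventually (gt_mem_nhds (half_pos hε))).and self_mem_nhdsWithin).exists
  obtain ⟨δx, hδx, hxδ⟩ := hxc.exists_forall_Icc_abs_sub_le hη
  obtain ⟨δy, hδy, hyδ⟩ := hyc.exists_forall_Icc_abs_sub_le hη
  refine ⟨min δx δy, lt_min hδx hδy, fun n t n' t' ht hmt ht' hmt' => ?_⟩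
  obtain ⟨N, r, hr, ⟨σ, hσ⟩, ⟨σ', hσ'⟩⟩ := exists_common_refinesVia hab ht ht'
  have hfine : ∀ {m : ℕ} {s : ℕ → ℝ} {τ : ℕ → ℕ}, IsPartitionOn a b m s →
      (∀ k < m, s (k + 1) - s k < min δx δy) → RefinesVia τ N r m s →
      |stieltjesSum x y N r - stieltjesSum x y m s| < ε / 2 := fun hs hms hτ =>
    (abs_stieltjesSum_sub_le_of_refinesVia hp hq hpp'.le hqq'.le hpq' hx hy hs hr hτ
      (le_of_lt (Set.mem_Ioi.mp hη)) (le_of_lt (Set.mem_Ioi.mp hη))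
      (hs.abs_sub_le_of_mesh_lt (fun k hk => (hms k hk).trans_le (min_le_left _ _)) hxδ)
      (hs.abs_sub_le_of_mesh_lt (fun k hk => (hms k hk).trans_le (min_le_right _ _)) hyδ)).trans_lt
      hsmall
  calc |stieltjesSum x y n t - stieltjesSum x y n' t'|
      ≤ |stieltjesSum x y N r - stieltjesSum x y n t| +
          |stieltjesSum x y N r - stieltjesSum x y n' t'| := by
        rw [abs_sub_comm (stieltjesSum x y N r) (stieltjesSum x y n t)]
        exact abs_sub_le _ _ _
    _ < ε / 2 + ε / 2 := add_lt_add (hfine ht hmt hσ) (hfine ht' hmt' hσ')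
    _ = ε := add_halves ε

theorem exists_forall_mesh_lt_abs_sub_lt {a b : ℝ} (hab : a ≤ b) (S : ℕ → (ℕ → ℝ) → ℝ)
    (hS : ∀ ε > 0, ∃ δ > 0, ∀ n t n' t', IsPartitionOn a b n t →
      (∀ k < n, t (k + 1) - t k < δ) → IsPartitionOn a b n' t' →
      (∀ k < n', t' (k + 1) - t' k < δ) → |S n t - S n' t'| < ε) :
    ∃ I : ℝ, ∀ ε > 0, ∃ δ > 0, ∀ n t, IsPartitionOn a b n t →
      (∀ k < n, t (k + 1) - t k < δ) → |S n t - I| < ε := by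
  set u : ℕ → ℕ → ℝ := fun j k => a + k * ((b - a) / ((j + 1 : ℕ) : ℝ))
  have hu : ∀ j, IsPartitionOn a b (j + 1) (u j) := fun j =>
    isPartitionOn_uniform hab (Nat.le_add_left 1 j)
  have hmesh : ∀ δ > 0, ∀ᶠ j in atTop, ∀ k < j + 1, u j (k + 1) - u j k < δ := fun δ hδ => by
    filter_upwards [((tendsto_const_div_atTop_nhds_zero_nat (b - a)).comp
      (tendsto_add_atTop_nat 1)).eventually (gt_mem_nhds hδ)] with j hj k _
    simp only [u, Function.comp_apply] at hj ⊢
    push_cast at hj ⊢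
    linarith
  have hcauchy : CauchySeq fun j => S (j + 1) (u j) := by
    refine Metric.cauchySeq_iff.mpr fun ε hε => ?_
    obtain ⟨δ, hδ, hclose⟩ := hS ε hε
    obtain ⟨J, hJ⟩ := eventually_atTop.mp (hmesh δ hδ)
    exact ⟨J, fun i hi j hj => hclose _ _ _ _ (hu i) (hJ i hi) (hu j) (hJ j hj)⟩
  obtain ⟨I, hI⟩ := cauchySeq_tendsto_of_complete hcauchy
  refine ⟨I, fun ε hε => ?_⟩
  obtain ⟨δ, hδ, hclose⟩ := hS (ε / 2) (half_pos hε)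
  obtain ⟨j, hj, hjI⟩ :=
    ((hmesh δ hδ).and (Metric.tendsto_nhds.mp hI (ε / 2) (half_pos hε))).exists
  refine ⟨δ, hδ, fun n t ht hmt => ?_⟩
  calc |S n t - I| ≤ |S n t - S (j + 1) (u j)| + |S (j + 1) (u j) - I| := abs_sub_le _ _ _
    _ < ε / 2 + ε / 2 := add_lt_add (hclose _ _ _ _ ht hmt (hu j) hj) (by rwa [← Real.dist_eq])
    _ = ε := add_halves ε

/-- Young: for `x` continuous of finite `p`-variation and `y` continuous
of finite `q`-variation on `[0,1]`, with `p, q ≥ 1` and `1/p + 1/q > 1`, the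
Riemann–Stieltjes sums `Σ_k x_{t_k}(y_{t_{k+1}} − y_{t_k})` converge as the mesh → 0. -/
theorem young_integral_exists (x y : ℝ → ℝ) (p q : ℝ)
    (hp : 1 ≤ p) (hq : 1 ≤ q) (hpq : 1 / p + 1 / q > 1)
    (hx : ContinuousOn x (Set.Icc 0 1)) (hy : ContinuousOn y (Set.Icc 0 1))
    (hxv : FiniteVarOn x p 0 1) (hyv : FiniteVarOn y q 0 1) :
    ∃ I : ℝ, ∀ ε > 0, ∃ δ > 0, ∀ n t, IsPartitionOn 0 1 n t →
      (∀ k < n, t (k + 1) - t k < δ) →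
      |(∑ k ∈ Finset.range n, x (t k) * (y (t (k + 1)) - y (t k))) - I| < ε := by
  have hpq' : 1 < p⁻¹ + q⁻¹ := by simpa only [one_div] using hpq
  exact exists_forall_mesh_lt_abs_sub_lt zero_le_one (stieltjesSum x y) fun ε hε =>
    exists_abs_stieltjesSum_sub_lt zero_lt_one (by linarith) (by linarith) hpq' hx hy hxv hyv hε
end

section
/- For a polynomial one-form p : V → L(V,U) of degree n and a continuous bounded-variation path x : [S,T] → V with x_S = 0, the classical integral equals a linear combination of iterated integrals: ∫_S^T p(x_r) dx_r = Σ_{k=0}^{n} (D^k p)(0) X^{k+1}_{S,T}, where X^{k+1}_{S,T} = ∫_{S<u₁<⋯<u_{k+1}<T} dx_{u₁} ⊗ ⋯ ⊗ dx_{u_{k+1}}. -/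
/-!
For a symmetric `k`-linear `M`, `∫_{S<u₁<⋯<u_k<t} M(dx_{u₁}, …, dx_{u_k}) = M(x_t - x_S, …)/k!`.
By induction on `k`: integrating out the last variable `s` leaves the order-`k` integral of
`M(·, …, ·, ẋ_s)`, i.e. `M(x_s - x_S, …, x_s - x_S, ẋ_s)/k!`, and by symmetry this is the
derivative of `M(x_s - x_S, …)/(k+1)!`. Applied to `(D^k p)(0)` with its last argument frozen at
`ẋ_r`, and with `x_S = 0`, this identifies each term of `∫ p(x_r) dx_r` with
`(D^k p)(0) X^{k+1}_{S,T}`.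
-/

open MeasureTheory intervalIntegral

/-- The iterated integral `∫_{S < u₀ < ⋯ < u_{k-1} < T} f(u) du` over the ordered
simplex, defined by integrating out the last (largest) variable. -/
noncomputable def simplexIntegral {U : Type*} [NormedAddCommGroup U] [NormedSpace ℝ U] :
    (k : ℕ) → ((Fin k → ℝ) → U) → ℝ → ℝ → U
  | 0, f, _, _ => f Fin.elim0
  | k + 1, f, S, T => ∫ t in S..T, simplexIntegral k (fun u => f (Fin.snoc u t)) S t

theorem Fin.snoc_comp_swap_castSucc {α : Type*} {k : ℕ} (a : Fin k → α) (w : α) (i j : Fin k) :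
    (Fin.snoc a w : Fin (k + 1) → α) ∘ Equiv.swap i.castSucc j.castSucc =
      Fin.snoc (a ∘ Equiv.swap i j) w := by
  funext m
  refine Fin.lastCases ?_ (fun q => ?_) m
  · simp [Equiv.swap_apply_of_ne_of_ne (Fin.castSucc_lt_last i).ne'
      (Fin.castSucc_lt_last j).ne']
  · simp [(Fin.castSucc_injective k).swap_apply]

theorem Function.update_const_last_eq_snoc {α : Type*} {k : ℕ} (c w : α) :
    Function.update (fun _ : Fin (k + 1) => c) (Fin.last k) w = Fin.snoc (fun _ => c) w := by
  funext m
  refine Fin.lastCases ?_ (fun q => ?_) m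
  · simp
  · simp [(Fin.castSucc_lt_last q).ne]

namespace ContinuousMultilinearMap

variable {V U : Type*} [NormedAddCommGroup V] [NormedSpace ℝ V]
  [NormedAddCommGroup U] [NormedSpace ℝ U] {k : ℕ}

noncomputable def applyLast (M : ContinuousMultilinearMap ℝ (fun _ : Fin (k + 1) => V) U) (w : V) :
    ContinuousMultilinearMap ℝ (fun _ : Fin k => V) U :=
  (ContinuousLinearMap.apply ℝ U w).compContinuousMultilinearMap M.curryRight

@[simp]
theorem applyLast_apply (M : ContinuousMultilinearMap ℝ (fun _ : Fin (k + 1) => V) U) (w : V)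
    (v : Fin k → V) : M.applyLast w v = M (Fin.snoc v w) :=
  rfl

theorem applyLast_apply_comp_swap (M : ContinuousMultilinearMap ℝ (fun _ : Fin (k + 1) => V) U)
    (hM : ∀ (a : Fin (k + 1) → V) (i j : Fin k),
      M (a ∘ Equiv.swap i.castSucc j.castSucc) = M a)
    (w : V) (v : Fin k → V) (i j : Fin k) :
    M.applyLast w (v ∘ Equiv.swap i j) = M.applyLast w v := by
  rw [applyLast_apply, applyLast_apply, ← Fin.snoc_comp_swap_castSucc, hM]

theorem apply_update_const (M : ContinuousMultilinearMap ℝ (fun _ : Fin (k + 1) => V) U)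
    (hM : ∀ (a : Fin (k + 1) → V) (i j : Fin (k + 1)), M (a ∘ Equiv.swap i j) = M a)
    (c w : V) (i : Fin (k + 1)) :
    M (Function.update (fun _ => c) i w) = M (Fin.snoc (fun _ => c) w) := by
  rw [← hM _ i (Fin.last k), Function.update_comp_equiv, Equiv.symm_swap,
    Equiv.swap_apply_left]
  exact congrArg M (Function.update_const_last_eq_snoc c w)

theorem hasDerivAt_apply_const (M : ContinuousMultilinearMap ℝ (fun _ : Fin (k + 1) => V) U)
    (hM : ∀ (a : Fin (k + 1) → V) (i j : Fin (k + 1)), M (a ∘ Equiv.swap i j) = M a)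
    {y : ℝ → V} {y' : V} {r : ℝ} (hy : HasDerivAt y y' r) :
    HasDerivAt (fun r => M (fun _ => y r)) ((k + 1 : ℝ) • M (Fin.snoc (fun _ => y r) y')) r := by
  have h := (M.hasFDerivAt fun _ => y r).comp_hasDerivAt r
    (hasDerivAt_pi.2 fun _ => hy : HasDerivAt (fun r (_ : Fin (k + 1)) => y r) (fun _ => y') r)
  rwa [linearDeriv_apply, Finset.sum_congr rfl fun i _ => M.apply_update_const hM _ _ i,
    Finset.sum_const, Finset.card_univ, Fintype.card_fin, ← Nat.cast_smul_eq_nsmul ℝ,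
    Nat.cast_succ] at h

end ContinuousMultilinearMap

section SimplexIntegral

variable {V U : Type*} [NormedAddCommGroup V] [NormedSpace ℝ V]
  [NormedAddCommGroup U] [NormedSpace ℝ U]

theorem simplexIntegral_succ_apply_comp {k : ℕ}
    (M : ContinuousMultilinearMap ℝ (fun _ : Fin (k + 1) => V) U) (f : ℝ → V) (S t : ℝ) :
    simplexIntegral (k + 1) (fun u => M fun i => f (u i)) S t =
      ∫ s in S..t, simplexIntegral k (fun u => M.applyLast (f s) fun i => f (u i)) S s := by
  rw [simplexIntegral]
  congr! with s u
  exact congrArg M (Fin.comp_snoc f u s)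

theorem simplexIntegral_apply_deriv [CompleteSpace U] {x : ℝ → V} (hx : ContDiff ℝ 1 x) (S : ℝ) :
    ∀ {k : ℕ} (M : ContinuousMultilinearMap ℝ (fun _ : Fin k => V) U),
      (∀ (a : Fin k → V) (i j : Fin k), M (a ∘ Equiv.swap i j) = M a) → ∀ t : ℝ,
      simplexIntegral k (fun u => M fun i => deriv x (u i)) S t =
        (k.factorial : ℝ)⁻¹ • M fun _ => x t - x S
  | 0, M, _, t => by
    simp only [simplexIntegral, Nat.factorial_zero, Nat.cast_one, inv_one, one_smul]
    exact congrArg M (Subsingleton.elim _ _)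
  | k + 1, M, hM, t => by
    have hinner : ∀ s, simplexIntegral k (fun u => M.applyLast (deriv x s) fun i => deriv x (u i))
        S s = (k.factorial : ℝ)⁻¹ • M (Fin.snoc (fun _ => x s - x S) (deriv x s)) := fun s => by
      rw [simplexIntegral_apply_deriv hx S _ (M.applyLast_apply_comp_swap
        (fun a i j => hM a _ _) _) s, M.applyLast_apply]
    have hderiv : ∀ s, HasDerivAt (fun r => ((k + 1).factorial : ℝ)⁻¹ • M fun _ => x r - x S)
        ((k.factorial : ℝ)⁻¹ • M (Fin.snoc (fun _ => x s - x S) (deriv x s))) s := fun s => by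
      convert (M.hasDerivAt_apply_const hM (((hx.differentiable one_ne_zero) s).hasDerivAt.sub_const
        (x S))).const_smul ((k + 1).factorial : ℝ)⁻¹ using 1
      · rfl
      rw [smul_smul, Nat.factorial_succ]
      congr 1
      push_cast
      field_simp
    have hcont : Continuous fun s =>
        (k.factorial : ℝ)⁻¹ • M (Fin.snoc (fun _ => x s - x S) (deriv x s)) := by
      have := hx.continuous
      have := hx.continuous_deriv le_rfl
      fun_prop
    simp_rw [simplexIntegral_succ_apply_comp, hinner]
    rw [integral_eq_sub_of_hasDerivAt (fun s _ => hderiv s) (hcont.intervalIntegrable _ _)]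
    simp [← Pi.zero_def]

end SimplexIntegral

theorem polynomial_one_form_integral_eq_iterated_integrals_general
    {V U : Type*} [NormedAddCommGroup V] [NormedSpace ℝ V]
    [NormedAddCommGroup U] [NormedSpace ℝ U] [CompleteSpace U]
    (n : ℕ) (D : (k : ℕ) → ContinuousMultilinearMap ℝ (fun _ : Fin (k + 1) => V) U)
    (hsym : ∀ k, k ≤ n → ∀ (a : Fin (k + 1) → V) (σ : Equiv.Perm (Fin (k + 1))),
      σ (Fin.last k) = Fin.last k → D k a = D k (a ∘ σ))
    (S T : ℝ) (x : ℝ → V) (hx : ContDiff ℝ 1 x) (hxS : x S = 0) :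
    (∫ r in S..T, ∑ k ∈ Finset.range (n + 1),
        (1 / (Nat.factorial k : ℝ)) • D k (Fin.snoc (fun _ => x r) (deriv x r))) =
      ∑ k ∈ Finset.range (n + 1),
        simplexIntegral (k + 1) (fun u => D k (fun i => deriv x (u i))) S T := by
  have hxc := hx.continuous
  have hx'c := hx.continuous_deriv le_rfl
  rw [integral_finsetSum fun k _ => (by fun_prop : Continuous _).intervalIntegrable S T]
  refine Finset.sum_congr rfl fun k hk => ?_
  have hDk : ∀ (a : Fin (k + 1) → V) (i j : Fin k),
      D k (a ∘ Equiv.swap i.castSucc j.castSucc) = D k a := fun a i j =>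
    (hsym k (Finset.mem_range_succ_iff.mp hk) a _ (Equiv.swap_apply_of_ne_of_ne
      (Fin.castSucc_lt_last i).ne' (Fin.castSucc_lt_last j).ne')).symm
  rw [simplexIntegral_succ_apply_comp]
  refine integral_congr fun r _ => ?_
  rw [simplexIntegral_apply_deriv hx S _ ((D k).applyLast_apply_comp_swap hDk _), hxS]
  simp

/-- for a polynomial one-form `p(v)(w) = Σ_{k=0}^n (D^k p)(0)(v^{⊗k}/k!)(w)`
(with `(D^k p)(0)` symmetric in its first `k` arguments) and a smooth path `x` with
`x_S = 0`, the classical integral equals a linear combination of iterated integrals: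
`∫_S^T p(x_r) dx_r = Σ_{k=0}^n (D^k p)(0) X^{k+1}_{S,T}` where
`X^{k+1}_{S,T} = ∫_{S<u₁<⋯<u_{k+1}<T} dx_{u₁} ⊗ ⋯ ⊗ dx_{u_{k+1}}`. -/
theorem polynomial_one_form_integral_eq_iterated_integrals
    {V U : Type*} [NormedAddCommGroup V] [NormedSpace ℝ V]
    [NormedAddCommGroup U] [NormedSpace ℝ U] [CompleteSpace U]
    (n : ℕ) (D : (k : ℕ) → ContinuousMultilinearMap ℝ (fun _ : Fin (k + 1) => V) U)
    (hsym : ∀ k, k ≤ n → ∀ (a : Fin (k + 1) → V) (σ : Equiv.Perm (Fin (k + 1))),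
      σ (Fin.last k) = Fin.last k → D k a = D k (a ∘ σ))
    (S T : ℝ) (hST : S ≤ T) (x : ℝ → V) (hx : ContDiff ℝ 1 x) (hxS : x S = 0) :
    (∫ r in S..T, ∑ k ∈ Finset.range (n + 1),
        (1 / (Nat.factorial k : ℝ)) • D k (Fin.snoc (fun _ => x r) (deriv x r))) =
      ∑ k ∈ Finset.range (n + 1),
        simplexIntegral (k + 1) (fun u => D k (fun i => deriv x (u i))) S T :=
  polynomial_one_form_integral_eq_iterated_integrals_general n D hsym S T x hx hxS
end
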